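/- Fix n, p ∈ ℕ, constants Δ_i > 0 (i = 1,…,n), a constant k_n > 0, positive definite diagonal n×n matrices K_r = diag{κ_i} and α = diag{α_i}, and a positive definite diagonal p×p matrix Γ. Let e, r : ℝ → ℝⁿ and θ̃ : ℝ → ℝᵖ be differentiable at t, let M : ℝ → ℝ^{n×n} be differentiable at t with M(t) symmetric, let C(t), Y_d(t) be real matrices of sizes n×n and n×p, let χ(t) ∈ ℝⁿ, and let ρ₁, ρ₂ ≥ 0 be real numbers. Define K_e = diag{1 + tan²((π/2)·e_i(t)²/Δ_i²)}. Assume: (i) |e_i(t)| < Δ_i for all i; (ii) M(t)·r'(t) = −C(t)·r(t) − K_r·r(t) − K_e·e(t) + χ(t) − (k_n ρ₁² + ρ₂)·r(t) + Y_d(t)·θ̃(t); (iii) r(t)ᵀ(M'(t) − 2C(t))r(t) = 0; (iv) ‖χ(t)‖ ≤ ρ₁‖e(t)‖ + ρ₂‖r(t)‖; (v) e'(t) = −α·e(t) + r(t); (vi) θ̃'(t) = −Γ·Y_d(t)ᵀ·r(t). Then the function V_t(s) = ½ r(s)ᵀM(s)r(s) + Σᵢ (Δ_i²/π)·tan((π/2)·e_i(s)²/Δ_i²)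 + ½ θ̃(s)ᵀΓ⁻¹θ̃(s) is differentiable at t and satisfies V_t'(t) ≤ −(minᵢ κ_i)·‖r(t)‖² − (minᵢ α_i(1 + tan²((π/2)·e_i(t)²/Δ_i²)) − 1/(4k_n))·‖e(t)‖². -/

import Mathlib

/-!
The kinetic part `½ rᵀ M r` has derivative `rᵀ M ṙ + ½ rᵀ Ṁ r`, and skew-symmetry turns
`½ rᵀ Ṁ r` into the `rᵀ C r` that cancels the Coriolis term of the closed loop. Since
`tan' = 1 + tan²`, the barrier `(Δ²/π) tan((π/2) x²/Δ²)` has derivative `K_e x ẋ`, so with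
`ė = −α e + r` its cross term `rᵀ K_e e` cancels the `−K_e e` feedback. The adaptive law makes
the estimation part cancel `rᵀ Y_d θ̃`. What is left is
`−rᵀ K_r r − eᵀ α K_e e + rᵀ χ − (k_n ρ₁² + ρ₂)‖r‖²`, and Cauchy–Schwarz together with Young's
inequality `ρ₁‖r‖‖e‖ ≤ k_n ρ₁²‖r‖² + ‖e‖²/(4k_n)` absorbs the mismatch `χ`.
-/

noncomputable def eucNorm {n : ℕ} (v : Fin n → ℝ) : ℝ := Real.sqrt (∑ i, v i ^ 2)

open Matrix

section
variable {m ι : Type*} [Fintype ι] {t : ℝ}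

theorem HasDerivAt.dotProduct {u v : ℝ → ι → ℝ} {u' v' : ι → ℝ}
    (hu : HasDerivAt u u' t) (hv : HasDerivAt v v' t) :
    HasDerivAt (fun s => u s ⬝ᵥ v s) (u' ⬝ᵥ v t + u t ⬝ᵥ v') t := by
  exact (HasDerivAt.fun_sum fun i (_ : i ∈ Finset.univ) =>
    (hasDerivAt_pi.1 hu i).mul (hasDerivAt_pi.1 hv i)).congr_deriv Finset.sum_add_distrib

theorem HasDerivAt.mulVec {A : ℝ → Matrix m ι ℝ} {A' : Matrix m ι ℝ} {v : ℝ → ι → ℝ}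
    {v' : ι → ℝ} (hA : ∀ i j, HasDerivAt (fun s => A s i j) (A' i j) t)
    (hv : HasDerivAt v v' t) :
    HasDerivAt (fun s => A s *ᵥ v s) (A' *ᵥ v t + A t *ᵥ v') t :=
  hasDerivAt_pi.2 fun i => (hasDerivAt_pi.2 (hA i)).dotProduct hv

theorem Matrix.IsSymm.dotProduct_mulVec_comm {A : Matrix ι ι ℝ} (hA : A.IsSymm) (v w : ι → ℝ) :
    v ⬝ᵥ (A *ᵥ w) = w ⬝ᵥ (A *ᵥ v) := by
  rw [dotProduct_mulVec, ← mulVec_transpose, hA.eq, dotProduct_comm]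

theorem hasDerivAt_half_dotProduct_mulVec {A : ℝ → Matrix ι ι ℝ} {A' : Matrix ι ι ℝ}
    {v : ℝ → ι → ℝ} {v' : ι → ℝ} (hA : ∀ i j, HasDerivAt (fun s => A s i j) (A' i j) t)
    (hAt : (A t).IsSymm) (hv : HasDerivAt v v' t) :
    HasDerivAt (fun s => (1 / 2) * (v s ⬝ᵥ (A s *ᵥ v s)))
      (v t ⬝ᵥ (A t *ᵥ v') + (1 / 2) * (v t ⬝ᵥ (A' *ᵥ v t))) t := by
  refine ((hv.dotProduct (HasDerivAt.mulVec hA hv)).const_mul (1 / 2)).congr_deriv ?_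
  rw [hAt.dotProduct_mulVec_comm v', dotProduct_add]
  ring

theorem iInf_mul_dotProduct_self_le [DecidableEq ι] (d v : ι → ℝ) :
    (⨅ i, d i) * (v ⬝ᵥ v) ≤ v ⬝ᵥ (diagonal d *ᵥ v) := by
  rcases isEmpty_or_nonempty ι with hι | hι
  · simp [dotProduct]
  · simp only [dotProduct, mulVec_diagonal, Finset.mul_sum]
    refine Finset.sum_le_sum fun i _ => ?_
    nlinarith [ciInf_le (Finite.bddBelow_range d) i, mul_self_nonneg (v i)]

theorem diagonal_mulVec_dotProduct_diagonal_mulVec [DecidableEq ι] (a b v : ι → ℝ) :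
    (diagonal a *ᵥ v) ⬝ᵥ (diagonal b *ᵥ v) = v ⬝ᵥ (diagonal (b * a) *ᵥ v) := by
  simp only [dotProduct, mulVec_diagonal, Pi.mul_apply]
  exact Finset.sum_congr rfl fun i _ => by ring

theorem inv_diagonal_mul_diagonal [DecidableEq ι] {a : ι → ℝ} (ha : ∀ i, a i ≠ 0) :
    (diagonal a)⁻¹ * diagonal a = 1 := by
  refine nonsing_inv_mul _ (isUnit_iff_ne_zero.2 ?_)
  rw [det_diagonal]
  exact Finset.prod_ne_zero_iff.2 fun i _ => ha i

end

theorem eucNorm_eq_norm {n : ℕ} (v : Fin n → ℝ) : eucNorm v = ‖WithLp.toLp 2 v‖ := by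
  simp [eucNorm, EuclideanSpace.norm_eq]

theorem eucNorm_sq {n : ℕ} (v : Fin n → ℝ) : eucNorm v ^ 2 = v ⬝ᵥ v := by
  rw [eucNorm, Real.sq_sqrt (by positivity), dotProduct]
  simp [sq]

theorem dotProduct_le_eucNorm_mul {n : ℕ} (v w : Fin n → ℝ) : v ⬝ᵥ w ≤ eucNorm v * eucNorm w := by
  have := real_inner_le_norm (WithLp.toLp 2 v : EuclideanSpace ℝ (Fin n)) (WithLp.toLp 2 w)
  simpa [eucNorm_eq_norm, EuclideanSpace.inner_eq_star_dotProduct, dotProduct_comm] using this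

noncomputable def tanBarrier (Δ x : ℝ) : ℝ :=
  (Δ ^ 2 / Real.pi) * Real.tan ((Real.pi / 2) * x ^ 2 / Δ ^ 2)

noncomputable def tanBarrierGain (Δ x : ℝ) : ℝ :=
  1 + Real.tan ((Real.pi / 2) * x ^ 2 / Δ ^ 2) ^ 2

theorem cos_tanBarrier_arg_pos {Δ x : ℝ} (hx : |x| < Δ) :
    0 < Real.cos ((Real.pi / 2) * x ^ 2 / Δ ^ 2) := by
  have hΔ : 0 < Δ ^ 2 := pow_pos ((abs_nonneg x).trans_lt hx) 2
  have hsq : x ^ 2 < Δ ^ 2 := sq_lt_sq' (abs_lt.1 hx).1 (abs_lt.1 hx).2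
  refine Real.cos_pos_of_mem_Ioo ⟨by linarith [Real.pi_pos, (by positivity :
    0 ≤ (Real.pi / 2) * x ^ 2 / Δ ^ 2)], ?_⟩
  rw [div_lt_iff₀ hΔ]
  nlinarith [Real.pi_pos]

theorem hasDerivAt_tanBarrier {Δ : ℝ} {x : ℝ → ℝ} {x' t : ℝ} (hx : HasDerivAt x x' t)
    (hlt : |x t| < Δ) :
    HasDerivAt (fun s => tanBarrier Δ (x s)) (tanBarrierGain Δ (x t) * x t * x') t := by
  have hcos := (cos_tanBarrier_arg_pos hlt).ne'
  have hΔ : Δ ≠ 0 := ((abs_nonneg _).trans_lt hlt).ne'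
  have harg : HasDerivAt (fun s => (Real.pi / 2) * x s ^ 2 / Δ ^ 2)
      ((Real.pi / 2) * ((2 : ℕ) * x t ^ 1 * x') / Δ ^ 2) t :=
    ((hx.pow 2).const_mul _).div_const _
  refine (((Real.hasDerivAt_tan hcos).comp t harg).const_mul (Δ ^ 2 / Real.pi)).congr_deriv ?_
  -- `1 / cos² = 1 + tan²` turns the chain rule into the gain
  rw [tanBarrierGain, ← Real.inv_one_add_tan_sq hcos, one_div, inv_inv]
  field_simp
  ring

theorem hasDerivAt_sum_tanBarrier {ι : Type*} [Fintype ι] [DecidableEq ι] {Δ : ι → ℝ}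
    {e : ℝ → ι → ℝ} {e' : ι → ℝ} {t : ℝ} (he : HasDerivAt e e' t)
    (hlt : ∀ i, |e t i| < Δ i) :
    HasDerivAt (fun s => ∑ i, tanBarrier (Δ i) (e s i))
      ((diagonal (fun i => tanBarrierGain (Δ i) (e t i)) *ᵥ e t) ⬝ᵥ e') t := by
  refine (HasDerivAt.fun_sum fun i (_ : i ∈ Finset.univ) =>
    hasDerivAt_tanBarrier (hasDerivAt_pi.1 he i) (hlt i)).congr_deriv ?_
  simp only [dotProduct, mulVec_diagonal]

theorem dotProduct_sub_mul_self_le_of_eucNorm_le {n : ℕ} {e r χ : Fin n → ℝ}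
    {k ρ₁ ρ₂ : ℝ} (hk : 0 < k) (hχ : eucNorm χ ≤ ρ₁ * eucNorm e + ρ₂ * eucNorm r) :
    r ⬝ᵥ χ - (k * ρ₁ ^ 2 + ρ₂) * (r ⬝ᵥ r) ≤ 1 / (4 * k) * eucNorm e ^ 2 := by
  have hcs : r ⬝ᵥ χ ≤ eucNorm r * (ρ₁ * eucNorm e + ρ₂ * eucNorm r) :=
    (dotProduct_le_eucNorm_mul r χ).trans
      (mul_le_mul_of_nonneg_left hχ (Real.sqrt_nonneg _))
  have hyoung : ρ₁ * eucNorm r * eucNorm e - k * ρ₁ ^ 2 * eucNorm r ^ 2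
      ≤ 1 / (4 * k) * eucNorm e ^ 2 := by
    rw [one_div_mul_eq_div, le_div_iff₀ (by positivity)]
    nlinarith [sq_nonneg (2 * k * ρ₁ * eucNorm r - eucNorm e)]
  rw [← eucNorm_sq]
  linarith

open Matrix in
theorem tan_barrier_lyapunov_derivative_general (n p : ℕ)
    (Δ κ α : Fin n → ℝ) (kn : ℝ) (γ : Fin p → ℝ)
    (hkn : 0 < kn) (hγ : ∀ j, 0 < γ j)
    (t : ℝ) (e r : ℝ → Fin n → ℝ) (θ : ℝ → Fin p → ℝ)
    (e' r' : Fin n → ℝ) (θ' : Fin p → ℝ)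
    (he : HasDerivAt e e' t) (hr : HasDerivAt r r' t) (hθ : HasDerivAt θ θ' t)
    (M : ℝ → Matrix (Fin n) (Fin n) ℝ) (M' : Matrix (Fin n) (Fin n) ℝ)
    (hM : ∀ i j, HasDerivAt (fun s => M s i j) (M' i j) t)
    (hMsymm : (M t).IsSymm)
    (C : Matrix (Fin n) (Fin n) ℝ) (Yd : Matrix (Fin n) (Fin p) ℝ)
    (χ : Fin n → ℝ) (ρ1 ρ2 : ℝ)
    (hcons : ∀ i, |e t i| < Δ i)
    (hclosed : (M t) *ᵥ r' = -(C *ᵥ r t) - (Matrix.diagonal κ) *ᵥ r t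
      - (Matrix.diagonal (fun i =>
          1 + Real.tan ((Real.pi / 2) * (e t i) ^ 2 / (Δ i) ^ 2) ^ 2)) *ᵥ e t
      + χ - (kn * ρ1 ^ 2 + ρ2) • r t + Yd *ᵥ θ t)
    (hskew : r t ⬝ᵥ ((M' - (2 : ℝ) • C) *ᵥ r t) = 0)
    (hχ : eucNorm χ ≤ ρ1 * eucNorm (e t) + ρ2 * eucNorm (r t))
    (hedot : e' = -(Matrix.diagonal α *ᵥ e t) + r t)
    (hθdot : θ' = -(Matrix.diagonal γ *ᵥ (Ydᵀ *ᵥ r t))) :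
    ∃ V' : ℝ,
      HasDerivAt (fun s => (1 / 2) * (r s ⬝ᵥ (M s *ᵥ r s))
        + ∑ i, ((Δ i) ^ 2 / Real.pi) * Real.tan ((Real.pi / 2) * (e s i) ^ 2 / (Δ i) ^ 2)
        + (1 / 2) * (θ s ⬝ᵥ ((Matrix.diagonal γ)⁻¹ *ᵥ θ s))) V' t ∧
      V' ≤ -(⨅ i, κ i) * eucNorm (r t) ^ 2
        - ((⨅ i, α i * (1 + Real.tan ((Real.pi / 2) * (e t i) ^ 2 / (Δ i) ^ 2) ^ 2))
            - 1 / (4 * kn)) * eucNorm (e t) ^ 2 := by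
  simp only [← tanBarrierGain.eq_1] at hclosed ⊢
  set K : Fin n → ℝ := fun i => tanBarrierGain (Δ i) (e t i)
  refine ⟨_, ((hasDerivAt_half_dotProduct_mulVec hM hMsymm hr).add
    (hasDerivAt_sum_tanBarrier he hcons)).add (hasDerivAt_half_dotProduct_mulVec (A' := 0)
      (fun i j => hasDerivAt_const t ((diagonal γ)⁻¹ i j)) (isSymm_diagonal γ).inv hθ), ?_⟩
  have hkin : r t ⬝ᵥ (M t *ᵥ r') + 1 / 2 * (r t ⬝ᵥ (M' *ᵥ r t))
      = -(r t ⬝ᵥ (diagonal κ *ᵥ r t)) - r t ⬝ᵥ (diagonal K *ᵥ e t) + r t ⬝ᵥ χ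
        - (kn * ρ1 ^ 2 + ρ2) * (r t ⬝ᵥ r t) + r t ⬝ᵥ (Yd *ᵥ θ t) := by
    have hM' : r t ⬝ᵥ (M' *ᵥ r t) = 2 * (r t ⬝ᵥ (C *ᵥ r t)) := by
      simpa only [sub_mulVec, smul_mulVec, dotProduct_sub, dotProduct_smul, smul_eq_mul,
        sub_eq_zero] using hskew
    rw [hclosed, hM']
    simp only [dotProduct_add, dotProduct_sub, dotProduct_neg, dotProduct_smul, smul_eq_mul]
    ring
  have hbar : (diagonal K *ᵥ e t) ⬝ᵥ e'
      = -(e t ⬝ᵥ (diagonal (α * K) *ᵥ e t)) + r t ⬝ᵥ (diagonal K *ᵥ e t) := by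
    rw [hedot, dotProduct_add, dotProduct_neg, diagonal_mulVec_dotProduct_diagonal_mulVec,
      dotProduct_comm _ (r t)]
  have hadapt : θ t ⬝ᵥ ((diagonal γ)⁻¹ *ᵥ θ') = -(r t ⬝ᵥ (Yd *ᵥ θ t)) := by
    rw [hθdot, mulVec_neg, mulVec_mulVec, inv_diagonal_mul_diagonal fun j => (hγ j).ne',
      one_mulVec, dotProduct_neg, dotProduct_mulVec,
      ← mulVec_transpose, transpose_transpose, dotProduct_comm]
  rw [zero_mulVec, dotProduct_zero, mul_zero, add_zero, hbar, hadapt, eucNorm_sq, eucNorm_sq]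
  calc _ = -(r t ⬝ᵥ (diagonal κ *ᵥ r t)) - e t ⬝ᵥ (diagonal (α * K) *ᵥ e t)
        + (r t ⬝ᵥ χ - (kn * ρ1 ^ 2 + ρ2) * (r t ⬝ᵥ r t)) := by linarith
    _ ≤ -(⨅ i, κ i) * (r t ⬝ᵥ r t) - ((⨅ i, (α * K) i) - 1 / (4 * kn)) * (e t ⬝ᵥ e t) := by
      linarith [iInf_mul_dotProduct_self_le κ (r t), iInf_mul_dotProduct_self_le (α * K) (e t),
        eucNorm_sq (e t) ▸ dotProduct_sub_mul_self_le_of_eucNorm_le hkn hχ]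

open Matrix in
/-- Lyapunov-derivative inequality for the tangent-barrier gain design
`K_e = diag{1 + tan²((π/2)·e_i²/Δ_i²)}`: under the closed-loop error dynamics,
skew-symmetry, the bound on `χ`, the filtered-error relation and the adaptive update
law, the barrier Lyapunov function `V_t` is differentiable at `t` with
`V_t'(t) ≤ −(minᵢ κ_i)‖r‖² − (minᵢ α_i(1 + tan²((π/2)e_i²/Δ_i²)) − 1/(4k_n))‖e‖²`. -/
theorem tan_barrier_lyapunov_derivative (n p : ℕ) (hn : 0 < n)
    (Δ κ α : Fin n → ℝ) (kn : ℝ) (γ : Fin p → ℝ)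
    (hΔ : ∀ i, 0 < Δ i) (hkn : 0 < kn)
    (hκ : ∀ i, 0 < κ i) (hα : ∀ i, 0 < α i) (hγ : ∀ j, 0 < γ j)
    (t : ℝ) (e r : ℝ → Fin n → ℝ) (θ : ℝ → Fin p → ℝ)
    (e' r' : Fin n → ℝ) (θ' : Fin p → ℝ)
    (he : HasDerivAt e e' t) (hr : HasDerivAt r r' t) (hθ : HasDerivAt θ θ' t)
    (M : ℝ → Matrix (Fin n) (Fin n) ℝ) (M' : Matrix (Fin n) (Fin n) ℝ)
    (hM : ∀ i j, HasDerivAt (fun s => M s i j) (M' i j) t)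
    (hMsymm : (M t).IsSymm)
    (C : Matrix (Fin n) (Fin n) ℝ) (Yd : Matrix (Fin n) (Fin p) ℝ)
    (χ : Fin n → ℝ) (ρ1 ρ2 : ℝ) (hρ1 : 0 ≤ ρ1) (hρ2 : 0 ≤ ρ2)
    (hcons : ∀ i, |e t i| < Δ i)
    (hclosed : (M t) *ᵥ r' = -(C *ᵥ r t) - (Matrix.diagonal κ) *ᵥ r t
      - (Matrix.diagonal (fun i =>
          1 + Real.tan ((Real.pi / 2) * (e t i) ^ 2 / (Δ i) ^ 2) ^ 2)) *ᵥ e t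
      + χ - (kn * ρ1 ^ 2 + ρ2) • r t + Yd *ᵥ θ t)
    (hskew : r t ⬝ᵥ ((M' - (2 : ℝ) • C) *ᵥ r t) = 0)
    (hχ : eucNorm χ ≤ ρ1 * eucNorm (e t) + ρ2 * eucNorm (r t))
    (hedot : e' = -(Matrix.diagonal α *ᵥ e t) + r t)
    (hθdot : θ' = -(Matrix.diagonal γ *ᵥ (Ydᵀ *ᵥ r t))) :
    ∃ V' : ℝ,
      HasDerivAt (fun s => (1 / 2) * (r s ⬝ᵥ (M s *ᵥ r s))
        + ∑ i, ((Δ i) ^ 2 / Real.pi) * Real.tan ((Real.pi / 2) * (e s i) ^ 2 / (Δ i) ^ 2)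
        + (1 / 2) * (θ s ⬝ᵥ ((Matrix.diagonal γ)⁻¹ *ᵥ θ s))) V' t ∧
      V' ≤ -(⨅ i, κ i) * eucNorm (r t) ^ 2
        - ((⨅ i, α i * (1 + Real.tan ((Real.pi / 2) * (e t i) ^ 2 / (Δ i) ^ 2) ^ 2))
            - 1 / (4 * kn)) * eucNorm (e t) ^ 2 :=
  tan_barrier_lyapunov_derivative_general n p Δ κ α kn γ hkn hγ t e r θ e' r' θ' he hr hθ M M' hM
    hMsymm C Yd χ ρ1 ρ2 hcons hclosed hskew hχ hedot hθdot
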